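/- Let q = exp(2πi·ℓ/26) with ℓ = -3 or ℓ = 10. Then q^{10} + q^8 + q^2 + 1 + q^{-2} + q^{-8} + q^{-10} is a root of the polynomial x^6 - 3x^5 - 6x^4 + 4x^3 + 5x^2 - x - 1. -/
import Mathlib


open Complex Real

/-- Key algebraic lemma: if `r` is a 13th root of unity different from 1, then
`d = r^10 + r^8 + r^2 + 1 + r^11 + r^5 + r^3` satisfies the sextic. -/
lemma G2_key (r : ℂ) (h13 : r ^ 13 = 1) (hne : r ≠ 1)
    (d : ℂ) (hd : d = r ^ 10 + r ^ 8 + r ^ 2 + 1 + r ^ 11 + r ^ 5 + r ^ 3) :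
    d ^ 6 - 3 * d ^ 5 - 6 * d ^ 4 + 4 * d ^ 3 + 5 * d ^ 2 - d - 1 = 0 := by
  have hS : 1 + r + r ^ 2 + r ^ 3 + r ^ 4 + r ^ 5 + r ^ 6 + r ^ 7 + r ^ 8 + r ^ 9
      + r ^ 10 + r ^ 11 + r ^ 12 = 0 := by
    have hm : (r - 1) * (1 + r + r ^ 2 + r ^ 3 + r ^ 4 + r ^ 5 + r ^ 6 + r ^ 7 + r ^ 8
        + r ^ 9 + r ^ 10 + r ^ 11 + r ^ 12) = 0 := by linear_combination h13
    rcases mul_eq_zero.mp hm with h | h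
    · exact absurd (sub_eq_zero.mp h) hne
    · exact h
  subst hd
  linear_combination ((1)*r^53 + (6)*r^52 + (15)*r^51 + (26)*r^50 + (45)*r^49 + (66)*r^48
    + (82)*r^47 + (120)*r^46 + (162)*r^45 + (206)*r^44 + (315)*r^43 + (399)*r^42
    + (485)*r^41 + (667)*r^40 + (732)*r^39 + (876)*r^38 + (1145)*r^37 + (1200)*r^36
    + (1527)*r^35 + (1837)*r^34 + (1860)*r^33 + (2363)*r^32 + (2495)*r^31 + (2547)*r^30
    + (3179)*r^29 + (3077)*r^28 + (3397)*r^27 + (3960)*r^26 + (3657)*r^25 + (4226)*r^24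
    + (4364)*r^23 + (4062)*r^22 + (4705)*r^21 + (4436)*r^20 + (4454)*r^19 + (4910)*r^18
    + (4476)*r^17 + (4733)*r^16 + (4772)*r^15 + (4429)*r^14 + (4683)*r^13 + (4482)*r^12
    + (4390)*r^11 + (4514)*r^10 + (4331)*r^9 + (4363)*r^8 + (4345)*r^7 + (4251)*r^6
    + (4267)*r^5 + (4221)*r^4 + (4199)*r^3 + (4199)*r^2 + (4187)*r + (4188)) * h13
    + 4187 * hS

theorem G2_loop_value_root (ℓ : ℤ) (hℓ : ℓ = -3 ∨ ℓ = 10)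
    (q : ℂ) (hq : q = Complex.exp (2 * Real.pi * Complex.I * ℓ / 26))
    (d : ℂ)
    (hd : d = q ^ (10 : ℤ) + q ^ (8 : ℤ) + q ^ (2 : ℤ) + 1 +
        q ^ (-2 : ℤ) + q ^ (-8 : ℤ) + q ^ (-10 : ℤ)) :
    d ^ 6 - 3 * d ^ 5 - 6 * d ^ 4 + 4 * d ^ 3 + 5 * d ^ 2 - d - 1 = 0 := by
  have h2pi : (2 * (Real.pi : ℂ) * Complex.I) ≠ 0 := by
    simp [Real.pi_ne_zero, Complex.I_ne_zero]
  rcases hℓ with hl | hl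
  · -- ℓ = -3 : q^13 = -1, use r = -q
    subst hl
    have hq13 : q ^ 13 = -1 := by
      rw [hq, ← Complex.exp_nat_mul]
      have harg : ((13 : ℕ) : ℂ) * (2 * Real.pi * Complex.I * ((-3 : ℤ) : ℂ) / 26)
          = Real.pi * Complex.I + ((-2 : ℤ) : ℂ) * (2 * Real.pi * Complex.I) := by
        push_cast; ring
      rw [harg, Complex.exp_add, Complex.exp_pi_mul_I,
        Complex.exp_int_mul_two_pi_mul_I]
      ring
    have hr13 : (-q) ^ 13 = 1 := by linear_combination -hq13
    have hrne : (-q) ≠ 1 := by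
      intro h
      have hqm : q = -1 := by linear_combination -h
      rw [hq] at hqm
      have h1 : Complex.exp (2 * Real.pi * Complex.I * ((-3 : ℤ) : ℂ) / 26
          + Real.pi * Complex.I) = 1 := by
        rw [Complex.exp_add, hqm, Complex.exp_pi_mul_I]; ring
      obtain ⟨n, hn⟩ := Complex.exp_eq_one_iff.mp h1
      have hc : (2 * (Real.pi : ℂ) * Complex.I) * (10 : ℂ)
          = (2 * (Real.pi : ℂ) * Complex.I) * ((26 : ℂ) * n) := by
        push_cast at hn ⊢; linear_combination 26 * hn
      have h10 : (10 : ℂ) = 26 * n := mul_left_cancel₀ h2pi hc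
      have h10' : (10 : ℤ) = 26 * n := by exact_mod_cast h10
      omega
    have e2 : q ^ (-2 : ℤ) = -q ^ 11 := by
      have hm : q ^ 2 * (-q ^ 11) = 1 := by linear_combination -hq13
      rw [show (-2 : ℤ) = -((2 : ℕ) : ℤ) by norm_num, zpow_neg, zpow_natCast]
      exact inv_eq_of_mul_eq_one_right hm
    have e8 : q ^ (-8 : ℤ) = -q ^ 5 := by
      have hm : q ^ 8 * (-q ^ 5) = 1 := by linear_combination -hq13
      rw [show (-8 : ℤ) = -((8 : ℕ) : ℤ) by norm_num, zpow_neg, zpow_natCast]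
      exact inv_eq_of_mul_eq_one_right hm
    have e10 : q ^ (-10 : ℤ) = -q ^ 3 := by
      have hm : q ^ 10 * (-q ^ 3) = 1 := by linear_combination -hq13
      rw [show (-10 : ℤ) = -((10 : ℕ) : ℤ) by norm_num, zpow_neg, zpow_natCast]
      exact inv_eq_of_mul_eq_one_right hm
    have hd' : d = (-q) ^ 10 + (-q) ^ 8 + (-q) ^ 2 + 1 + (-q) ^ 11 + (-q) ^ 5
        + (-q) ^ 3 := by
      rw [hd, e2, e8, e10, show q ^ (10:ℤ) = q ^ (10:ℕ) from zpow_natCast q 10,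
        show q ^ (8:ℤ) = q ^ (8:ℕ) from zpow_natCast q 8,
        show q ^ (2:ℤ) = q ^ (2:ℕ) from zpow_natCast q 2]
      ring
    exact G2_key (-q) hr13 hrne d hd'
  · -- ℓ = 10 : q^13 = 1
    subst hl
    have hq13 : q ^ 13 = 1 := by
      rw [hq, ← Complex.exp_nat_mul]
      have harg : ((13 : ℕ) : ℂ) * (2 * Real.pi * Complex.I * ((10 : ℤ) : ℂ) / 26)
          = ((5 : ℤ) : ℂ) * (2 * Real.pi * Complex.I) := by
        push_cast; ring
      rw [harg, Complex.exp_int_mul_two_pi_mul_I]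
    have hqne : q ≠ 1 := by
      intro h
      rw [hq] at h
      obtain ⟨n, hn⟩ := Complex.exp_eq_one_iff.mp h
      have hc : (2 * (Real.pi : ℂ) * Complex.I) * (5 : ℂ)
          = (2 * (Real.pi : ℂ) * Complex.I) * ((13 : ℂ) * n) := by
        push_cast at hn ⊢; linear_combination 13 * hn
      have h5 : (5 : ℂ) = 13 * n := mul_left_cancel₀ h2pi hc
      have h5' : (5 : ℤ) = 13 * n := by exact_mod_cast h5
      omega
    have e2 : q ^ (-2 : ℤ) = q ^ 11 := by
      have hm : q ^ 2 * q ^ 11 = 1 := by linear_combination hq13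
      rw [show (-2 : ℤ) = -((2 : ℕ) : ℤ) by norm_num, zpow_neg, zpow_natCast]
      exact inv_eq_of_mul_eq_one_right hm
    have e8 : q ^ (-8 : ℤ) = q ^ 5 := by
      have hm : q ^ 8 * q ^ 5 = 1 := by linear_combination hq13
      rw [show (-8 : ℤ) = -((8 : ℕ) : ℤ) by norm_num, zpow_neg, zpow_natCast]
      exact inv_eq_of_mul_eq_one_right hm
    have e10 : q ^ (-10 : ℤ) = q ^ 3 := by
      have hm : q ^ 10 * q ^ 3 = 1 := by linear_combination hq13
      rw [show (-10 : ℤ) = -((10 : ℕ) : ℤ) by norm_num, zpow_neg, zpow_natCast]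
      exact inv_eq_of_mul_eq_one_right hm
    have hd' : d = q ^ 10 + q ^ 8 + q ^ 2 + 1 + q ^ 11 + q ^ 5 + q ^ 3 := by
      rw [hd, e2, e8, e10, show q ^ (10:ℤ) = q ^ (10:ℕ) from zpow_natCast q 10,
        show q ^ (8:ℤ) = q ^ (8:ℕ) from zpow_natCast q 8,
        show q ^ (2:ℤ) = q ^ (2:ℕ) from zpow_natCast q 2]
    exact G2_key q hq13 hqne d hd'
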